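/- Let d ≥ 2 and D ≥ 1 be integers, let p ∈ (0,1), and let η ∈ {0,1}^{Z^d} be any fixed configuration. Then for P_p-almost every ω ∈ {0,1}^{Z^D} there exists no 1-Lipschitz embedding of η into ω, i.e., no injection f : Z^d → Z^D with ‖f(x) − f(y)‖₁ ≤ 1 whenever ‖x − y‖₁ = 1 and with η(x) = ω(f(x)) for all x ∈ Z^d. -/

import Mathlib

open MeasureTheory

/-- The ℓ¹-norm of an integer vector. -/
def norm1 {n : ℕ} (x : Fin n → ℤ) : ℤ := ∑ i, |x i|

/-- `μ` is a product Bernoulli(`p`) measure on site configurations: a probability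
measure under which the states of finitely many sites are independent, each site
being open (`true`) with probability `p`. -/
def IsBernoulli {S : Type*} (p : ℝ) (μ : Measure (S → Bool)) : Prop :=
  IsProbabilityMeasure μ ∧
    ∀ (A : Finset S) (b : S → Bool),
      μ {ω | ∀ s ∈ A, ω s = b s} = ∏ s ∈ A, ENNReal.ofReal (if b s then p else 1 - p)

/-- `f : ℤ^d → ℤ^D` is `M`-Lipschitz: images of ℓ¹-neighbours are at ℓ¹-distance
at most `M`. -/
def IsLip {d D : ℕ} (M : ℕ) (f : (Fin d → ℤ) → (Fin D → ℤ)) : Prop :=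
  ∀ x y, norm1 (x - y) = 1 → norm1 (f x - f y) ≤ (M : ℤ)

/-! Along two coordinate axes of `ℤ^d`, a 1-Lipschitz injection restricts to a map of the quarter
plane `ℕ²` sending lattice edges to unit steps and, by injectivity, unit squares to unit
parallelograms. Its values on the box `[0, n]²` are therefore determined by the image of the origin
and by the `2n` steps along the two axes: there are at most `(2D)^(2n)` candidate images, and each
reproduces the pattern of `η` with probability at most `max(p, 1 - p)^((n + 1)²)`. The union bound
tends to `0`, and a countable union over the image of the origin gives the theorem. -/

open Filter Topology
open scoped ENNReal

section Norm1

variable {n : ℕ}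

lemma norm1_nonneg (x : Fin n → ℤ) : 0 ≤ norm1 x :=
  Finset.sum_nonneg fun i _ => abs_nonneg (x i)

lemma norm1_eq_zero_iff {x : Fin n → ℤ} : norm1 x = 0 ↔ x = 0 := by
  simp [norm1, Finset.sum_eq_zero_iff_of_nonneg, funext_iff]

lemma norm1_neg (x : Fin n → ℤ) : norm1 (-x) = norm1 x := by
  simp [norm1]

lemma norm1_single (i : Fin n) (a : ℤ) : norm1 (Pi.single i a) = |a| := by
  rw [norm1, Finset.sum_eq_single i (fun j _ hj => by simp [Pi.single_eq_of_ne hj])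
    (by simp)]
  simp

lemma abs_apply_le_norm1 (x : Fin n → ℤ) (i : Fin n) : |x i| ≤ norm1 x :=
  Finset.single_le_sum (fun j _ => abs_nonneg (x j)) (Finset.mem_univ i)

lemma exists_eq_single_of_norm1_eq_one {x : Fin n → ℤ} (hx : norm1 x = 1) :
    ∃ i, ∃ s : ℤˣ, x = Pi.single i (s : ℤ) := by
  obtain ⟨i, hi⟩ : ∃ i, x i ≠ 0 := by
    by_contra! h
    simp [norm1_eq_zero_iff.2 (funext h)] at hx
  have hrest : ∑ j ∈ Finset.univ.erase i, |x j| = 0 := by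
    have := Finset.add_sum_erase Finset.univ (fun j => |x j|) (Finset.mem_univ i)
    have := Int.one_le_abs hi
    have := Finset.sum_nonneg fun j (_ : j ∈ Finset.univ.erase i) => abs_nonneg (x j)
    rw [norm1] at hx
    omega
  have hxi : IsUnit (x i) := Int.isUnit_iff_abs_eq.2 (le_antisymm (hx ▸ abs_apply_le_norm1 x i)
    (Int.one_le_abs hi))
  refine ⟨i, hxi.unit, funext fun j => ?_⟩
  rcases eq_or_ne j i with rfl | hj
  · simp
  · rw [Pi.single_eq_of_ne hj, ← abs_eq_zero]
    exact (Finset.sum_eq_zero_iff_of_nonneg fun k _ => abs_nonneg (x k)).1 hrest j (by simpa)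

lemma eq_of_norm1_eq_one_of_apply_eq {x y : Fin n → ℤ} (hx : norm1 x = 1) (hy : norm1 y = 1)
    {i : Fin n} (hxy : x i = y i) (hi : x i ≠ 0) : x = y := by
  obtain ⟨a, s, rfl⟩ := exists_eq_single_of_norm1_eq_one hx
  obtain ⟨b, t, rfl⟩ := exists_eq_single_of_norm1_eq_one hy
  obtain rfl : i = a := by_contra fun h => hi (Pi.single_eq_of_ne h _)
  obtain rfl : i = b := by_contra fun h => hi (hxy.trans (Pi.single_eq_of_ne h _))
  simp_all

lemma eq_of_add_eq_add_of_norm1_eq_one {x y z t : Fin n → ℤ} (hx : norm1 x = 1)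
    (hy : norm1 y = 1) (hz : norm1 z = 1) (ht : norm1 t = 1) (h : x + y = z + t) (hxz : x ≠ z)
    (hxy : x + y ≠ 0) : t = x := by
  obtain ⟨a, s, rfl⟩ := exists_eq_single_of_norm1_eq_one hx
  have hs : (s : ℤ) = 1 ∨ (s : ℤ) = -1 := by rcases Int.units_eq_one_or s with rfl | rfl <;> simp
  have hs0 : (s : ℤ) ≠ 0 := by omega
  have hza : z a ≠ s := fun hza =>
    hxz (eq_of_norm1_eq_one_of_apply_eq hx hz (i := a) (by simp [hza]) (by simp [hs0]))
  have hya : y a ≠ -s := fun hya => hxy <| by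
    rw [eq_of_norm1_eq_one_of_apply_eq hy ((norm1_neg _).trans hx) (i := a) (by simp [hya])
      (by simp [hya, hs0])]
    simp
  have hy_abs := abs_le.1 (hy ▸ abs_apply_le_norm1 y a)
  have hz_abs := abs_le.1 (hz ▸ abs_apply_le_norm1 z a)
  have ht_abs := abs_le.1 (ht ▸ abs_apply_le_norm1 t a)
  have ha := congrFun h a
  simp only [Pi.add_apply, Pi.single_eq_same] at ha
  -- `z a ≠ s` and `y a ≠ -s` leave `t a = s` as the only way to balance coordinate `a`
  have hta : t a = s := by omega
  exact eq_of_norm1_eq_one_of_apply_eq ht hx (i := a) (by simp [hta]) (by simp [hta, hs0])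

end Norm1

structure IsUnitGrid {D : ℕ} (F : ℕ × ℕ → (Fin D → ℤ)) : Prop where
  injective : Function.Injective F
  norm1_sub_fst : ∀ i j, norm1 (F (i + 1, j) - F (i, j)) = 1
  norm1_sub_snd : ∀ i j, norm1 (F (i, j + 1) - F (i, j)) = 1

def unitStep {D : ℕ} (c : Fin D × ℤˣ) : Fin D → ℤ := Pi.single c.1 c.2

def gridMap {D n : ℕ} (u : Fin D → ℤ) (v w : Fin n → Fin D × ℤˣ)
    (q : Fin (n + 1) × Fin (n + 1)) : Fin D → ℤ :=
  u + Fin.partialSum (unitStep ∘ v) q.1 + Fin.partialSum (unitStep ∘ w) q.2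

namespace IsUnitGrid

variable {D : ℕ} {F : ℕ × ℕ → (Fin D → ℤ)}

/-- Injectivity rules out the degenerate squares, so every unit square is a parallelogram. -/
lemma sub_fst_succ_snd (hF : IsUnitGrid F) (i j : ℕ) :
    F (i + 1, j + 1) - F (i, j + 1) = F (i + 1, j) - F (i, j) := by
  refine eq_of_add_eq_add_of_norm1_eq_one (hF.norm1_sub_fst i j) (hF.norm1_sub_snd (i + 1) j)
    (hF.norm1_sub_snd i j) (hF.norm1_sub_fst i (j + 1)) (by abel) ?_ ?_
  · intro h
    have := hF.injective (sub_left_injective h)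
    simp at this
  · rw [sub_add_sub_cancel']
    exact sub_ne_zero.2 (hF.injective.ne (by simp))

lemma sub_fst_eq (hF : IsUnitGrid F) (i j : ℕ) :
    F (i + 1, j) - F (i, j) = F (i + 1, 0) - F (i, 0) := by
  induction j with
  | zero => rfl
  | succ j ih => rw [hF.sub_fst_succ_snd, ih]

lemma apply_eq (hF : IsUnitGrid F) (i j : ℕ) : F (i, j) = F (i, 0) + F (0, j) - F (0, 0) := by
  induction i with
  | zero => abel
  | succ i ih => rw [← sub_add_cancel (F (i + 1, j)) (F (i, j)), hF.sub_fst_eq, ih]; abel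

lemma exists_gridMap (hF : IsUnitGrid F) (n : ℕ) :
    ∃ v w : Fin n → Fin D × ℤˣ, ∀ q : Fin (n + 1) × Fin (n + 1),
      F (q.1, q.2) = gridMap (F (0, 0)) v w q := by
  have hstep {x : Fin D → ℤ} (hx : norm1 x = 1) : ∃ c, unitStep c = x := by
    obtain ⟨i, s, rfl⟩ := exists_eq_single_of_norm1_eq_one hx
    exact ⟨(i, s), rfl⟩
  choose v hv using fun k : Fin n =>
    hstep (x := -F (k, 0) + F (k + 1, 0)) (by rw [neg_add_eq_sub]; exact hF.norm1_sub_fst k 0)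
  choose w hw using fun k : Fin n =>
    hstep (x := -F (0, k) + F (0, k + 1)) (by rw [neg_add_eq_sub]; exact hF.norm1_sub_snd 0 k)
  refine ⟨v, w, fun q => ?_⟩
  have hfst := congrFun (Fin.partialSum_left_neg fun i : Fin (n + 1) => F (i, 0)) q.1
  have hsnd := congrFun (Fin.partialSum_left_neg fun j : Fin (n + 1) => F (0, j)) q.2
  simp only [Fin.val_castSucc, Fin.val_succ, ← hv, ← hw, Pi.vadd_apply, vadd_eq_add,
    Fin.val_zero] at hfst hsnd
  rw [hF.apply_eq, ← hfst, ← hsnd, gridMap]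
  simp only [Function.comp_def]
  abel

end IsUnitGrid

lemma ENNReal.tendsto_pow_mul_pow_sq_nhds_zero {K R : ℝ≥0∞} (hK : K ≠ ∞) (hR : R < 1) :
    Tendsto (fun n : ℕ => K ^ n * R ^ (n ^ 2)) atTop (𝓝 0) := by
  have hKR : Tendsto (fun n : ℕ => K * R ^ n) atTop (𝓝 0) := by
    simpa using ENNReal.Tendsto.const_mul (ENNReal.tendsto_pow_atTop_nhds_zero_of_lt_one hR)
      (Or.inr hK)
  have hsmall : ∀ᶠ n : ℕ in atTop, K * R ^ n ≤ 2⁻¹ :=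
    (hKR.eventually (gt_mem_nhds (by norm_num))).mono fun _ h => h.le
  refine tendsto_of_tendsto_of_tendsto_of_le_of_le' tendsto_const_nhds
    (ENNReal.tendsto_pow_atTop_nhds_zero_of_lt_one (by norm_num : (2⁻¹ : ℝ≥0∞) < 1))
    (Eventually.of_forall fun _ => zero_le) (hsmall.mono fun n hn => ?_)
  calc K ^ n * R ^ (n ^ 2) = (K * R ^ n) ^ n := by rw [mul_pow, ← pow_mul, sq]
    _ ≤ 2⁻¹ ^ n := by gcongr

namespace IsBernoulli

variable {p : ℝ}

lemma measure_setOf_forall_apply_eq_le {S ι : Type*} [Fintype ι] {μ : Measure (S → Bool)}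
    (hμ : IsBernoulli p μ)
    {g : ι → S} (hg : Function.Injective g) (c : ι → Bool) :
    μ {ω | ∀ q, ω (g q) = c q} ≤ ENNReal.ofReal (max p (1 - p)) ^ Fintype.card ι := by
  classical
  set b : S → Bool := Function.extend g c fun _ => false
  calc μ {ω | ∀ q, ω (g q) = c q} ≤ μ {ω | ∀ s ∈ Finset.univ.image g, ω s = b s} := by
        refine measure_mono fun ω hω s hs => ?_
        obtain ⟨q, -, rfl⟩ := Finset.mem_image.1 hs
        rw [hω q]
        exact (hg.extend_apply c _ q).symm
    _ = ∏ s ∈ Finset.univ.image g, ENNReal.ofReal (if b s then p else 1 - p) := hμ.2 _ _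
    _ ≤ ∏ s ∈ Finset.univ.image g, ENNReal.ofReal (max p (1 - p)) :=
        Finset.prod_le_prod' fun s _ => ENNReal.ofReal_le_ofReal (by split <;> simp)
    _ = _ := by rw [Finset.prod_const, Finset.card_image_of_injective _ hg, Finset.card_univ]

lemma measure_exists_gridMap_le {D : ℕ} {μ : Measure ((Fin D → ℤ) → Bool)}
    (hμ : IsBernoulli p μ) (u : Fin D → ℤ) (n : ℕ) (c : Fin (n + 1) × Fin (n + 1) → Bool) :
    μ {ω | ∃ v w, Function.Injective (gridMap u v w) ∧ ∀ q, ω (gridMap u v w q) = c q}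
      ≤ (2 * D) ^ (2 * n) * ENNReal.ofReal (max p (1 - p)) ^ ((n + 1) ^ 2) := by
  let E (vw : (Fin n → Fin D × ℤˣ) × (Fin n → Fin D × ℤˣ)) :=
    {ω : (Fin D → ℤ) → Bool | Function.Injective (gridMap u vw.1 vw.2) ∧
      ∀ q, ω (gridMap u vw.1 vw.2 q) = c q}
  have hE (vw) : μ (E vw) ≤ ENNReal.ofReal (max p (1 - p)) ^ ((n + 1) ^ 2) := by
    by_cases hinj : Function.Injective (gridMap u vw.1 vw.2)
    · have := hμ.measure_setOf_forall_apply_eq_le hinj c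
      rw [Fintype.card_prod, Fintype.card_fin, ← sq] at this
      exact (measure_mono fun ω hω => hω.2).trans this
    · simp [E, hinj]
  calc _ ≤ μ (⋃ vw, E vw) := by
        refine measure_mono fun ω ⟨v, w, h⟩ => Set.mem_iUnion.2 ⟨(v, w), h⟩
    _ ≤ ∑ vw, μ (E vw) := measure_iUnion_fintype_le _ _
    _ ≤ ∑ _vw, ENNReal.ofReal (max p (1 - p)) ^ ((n + 1) ^ 2) := Finset.sum_le_sum fun vw _ => hE vw
    _ = _ := by
      rw [Finset.sum_const, Finset.card_univ, nsmul_eq_mul]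
      simp [Fintype.card_units_int]
      ring

lemma measure_exists_isUnitGrid_eq_zero {D : ℕ} {μ : Measure ((Fin D → ℤ) → Bool)}
    (hμ : IsBernoulli p μ) (hp0 : 0 < p) (hp1 : p < 1) (c : ℕ × ℕ → Bool) :
    μ {ω | ∃ F, IsUnitGrid F ∧ ∀ q, ω (F q) = c q} = 0 := by
  have hcover : {ω : (Fin D → ℤ) → Bool | ∃ F, IsUnitGrid F ∧ ∀ q, ω (F q) = c q}
      ⊆ ⋃ u, {ω | ∃ F, IsUnitGrid F ∧ F (0, 0) = u ∧ ∀ q, ω (F q) = c q} :=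
    fun ω ⟨F, hF, hω⟩ => Set.mem_iUnion.2 ⟨F (0, 0), F, hF, rfl, hω⟩
  refine measure_mono_null hcover (measure_iUnion_null fun u => ?_)
  set R := ENNReal.ofReal (max p (1 - p))
  have hR : R < 1 := by simpa [R] using ⟨hp1, hp0⟩
  refine le_antisymm (ge_of_tendsto' (ENNReal.tendsto_pow_mul_pow_sq_nhds_zero
    (by simp [ENNReal.mul_eq_top] : ((2 * D : ℝ≥0∞) ^ 2) ≠ ∞) hR) fun n => ?_) zero_le
  calc _ ≤ μ {ω | ∃ v w, Function.Injective (gridMap u v w) ∧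
          ∀ q, ω (gridMap u v w q) = c (q.1, q.2)} := by
        refine measure_mono fun ω ⟨F, hF, hu, hω⟩ => ?_
        obtain ⟨v, w, hvw⟩ := hF.exists_gridMap n
        refine ⟨v, w, fun q q' h => ?_, fun q => ?_⟩
        · rw [← hu, ← hvw, ← hvw] at h
          simpa [Prod.ext_iff, Fin.ext_iff] using hF.injective h
        · rw [← hu, ← hvw]
          exact hω _
    _ ≤ (2 * D) ^ (2 * n) * R ^ ((n + 1) ^ 2) := hμ.measure_exists_gridMap_le u n _
    _ ≤ ((2 * D) ^ 2) ^ n * R ^ (n ^ 2) := by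
        rw [← pow_mul]
        gcongr _ * ?_
        exact pow_le_pow_right_of_le_one' hR.le (Nat.pow_le_pow_left n.le_succ 2)

end IsBernoulli

lemma IsLip.norm1_sub_eq_one {d D : ℕ} {f : (Fin d → ℤ) → (Fin D → ℤ)} (hf : IsLip 1 f)
    (hinj : Function.Injective f) {x y : Fin d → ℤ} (h : norm1 (x - y) = 1) :
    norm1 (f x - f y) = 1 := by
  have hxy : x ≠ y := by
    rintro rfl
    simp [norm1] at h
  have hpos := norm1_eq_zero_iff.not.2 (sub_ne_zero.2 (hinj.ne hxy))
  have := norm1_nonneg (f x - f y)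
  have := hf x y h
  push_cast at this
  omega

def quarterPlane {d : ℕ} (a b : Fin d) (q : ℕ × ℕ) : Fin d → ℤ :=
  Pi.single a (q.1 : ℤ) + Pi.single b (q.2 : ℤ)

section QuarterPlane

variable {d : ℕ} {a b : Fin d}

lemma quarterPlane_injective (hab : a ≠ b) : Function.Injective (quarterPlane a b) := by
  intro q q' h
  have ha := congrFun h a
  have hb := congrFun h b
  simp [quarterPlane, hab, hab.symm] at ha hb
  exact Prod.ext ha hb

lemma norm1_quarterPlane_sub_fst (i j : ℕ) :
    norm1 (quarterPlane a b (i + 1, j) - quarterPlane a b (i, j)) = 1 := by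
  simp [quarterPlane, ← Pi.single_sub, norm1_single]

lemma norm1_quarterPlane_sub_snd (i j : ℕ) :
    norm1 (quarterPlane a b (i, j + 1) - quarterPlane a b (i, j)) = 1 := by
  simp [quarterPlane, ← Pi.single_sub, norm1_single]

lemma IsLip.isUnitGrid_comp_quarterPlane {D : ℕ} {f : (Fin d → ℤ) → (Fin D → ℤ)}
    (hf : IsLip 1 f) (hinj : Function.Injective f) (hab : a ≠ b) :
    IsUnitGrid (f ∘ quarterPlane a b) where
  injective := hinj.comp (quarterPlane_injective hab)
  norm1_sub_fst i j := hf.norm1_sub_eq_one hinj (norm1_quarterPlane_sub_fst i j)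
  norm1_sub_snd i j := hf.norm1_sub_eq_one hinj (norm1_quarterPlane_sub_snd i j)

end QuarterPlane

theorem no_one_lipschitz_embedding_general (d D : ℕ) (hd : 2 ≤ d)
    (p : ℝ) (hp0 : 0 < p) (hp1 : p < 1) (η : (Fin d → ℤ) → Bool)
    (μ : Measure ((Fin D → ℤ) → Bool)) (hμ : IsBernoulli p μ) :
    ∀ᵐ ω ∂μ, ¬ ∃ f : (Fin d → ℤ) → (Fin D → ℤ),
      Function.Injective f ∧ IsLip 1 f ∧ ∀ x, ω (f x) = η x := by
  let a : Fin d := ⟨0, by omega⟩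
  let b : Fin d := ⟨1, by omega⟩
  have hab : a ≠ b := by simp [a, b, Fin.ext_iff]
  simp only [ae_iff, not_not]
  refine measure_mono_null ?_ (hμ.measure_exists_isUnitGrid_eq_zero hp0 hp1 (η ∘ quarterPlane a b))
  rintro ω ⟨f, hinj, hf, hω⟩
  exact ⟨f ∘ quarterPlane a b, hf.isUnitGrid_comp_quarterPlane hinj hab, fun q => hω _⟩

/-- For `d ≥ 2`, `D ≥ 1`, `p ∈ (0,1)` and any fixed configuration `η` on `ℤ^d`,
for `P_p`-a.e. `ω` there is no 1-Lipschitz embedding of `η` into `ω`. -/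
theorem no_one_lipschitz_embedding (d D : ℕ) (hd : 2 ≤ d) (hD : 1 ≤ D)
    (p : ℝ) (hp0 : 0 < p) (hp1 : p < 1) (η : (Fin d → ℤ) → Bool)
    (μ : Measure ((Fin D → ℤ) → Bool)) (hμ : IsBernoulli p μ) :
    ∀ᵐ ω ∂μ, ¬ ∃ f : (Fin d → ℤ) → (Fin D → ℤ),
      Function.Injective f ∧ IsLip 1 f ∧ ∀ x, ω (f x) = η x :=
  no_one_lipschitz_embedding_general d D hd p hp0 hp1 η μ hμ
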